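/- Single extension step of a reduced alignment is proper (Lemma 1, repeatable-sequence case): let ε = pre ++ ε₁ ++ ε₂ ++ suf be a list of synchronizations such that projD ε₁ = projD ε₂ = α and projRG ε is a path. Suppose there exist positions j < ε₁.length and j' < ε₂.length such that ε₁.get j = MT a and ε₂.get j' = MT a for the same arc a, and the number of non-RH elements among the first j + 1 elements of ε₁ equals the number of non-RH elements among the first j' + 1 elements of ε₂. Define the middle copy mid := ε₂.take (j' + 1) ++ ε₁.drop (j + 1). Then for every natural number m ≥ 0, the extended alignment ε_ext := pre ++ ε₁ ++ mid^m ++ ε₂ ++ suf satisfies: (1) projD ε_ext = projD pre ++ α^(m+2) ++ projD suf, and (2) projRG ε_ext is a path with the same first arc and the same last arc as projRG ε. -/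

import Mathlib

/-- A synchronization: log move `LH`, model move `RH`, or synchronous move `MT`.
Arcs are triples `(src, label, tgt) : N × S × N`. -/
inductive Sync (S N : Type*) where
  | LH : S → Sync S N
  | RH : N × S × N → Sync S N
  | MT : N × S × N → Sync S N

/-- The log (DAFSA) projection: the trace labels of the `LH` and `MT` elements, in order. -/
def projD {S N : Type*} : List (Sync S N) → List S :=
  List.filterMap fun x =>
    match x with
    | .LH l => some l
    | .RH _ => none
    | .MT a => some a.2.1

/-- The model (reachability-graph) projection: the arcs of the `RH` and `MT`
elements, in order. -/
def projRG {S N : Type*} : List (Sync S N) → List (N × S × N) :=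
  List.filterMap fun x =>
    match x with
    | .LH _ => none
    | .RH a => some a
    | .MT a => some a

/-- Whether a synchronization is a model move (`RH`). -/
def isRH {S N : Type*} : Sync S N → Bool
  | .RH _ => true
  | _ => false

/-!
Cut `ε₁ = t₁ ++ d₁` and `ε₂ = t₂ ++ d₂` right after the marked moves `MT a`. Then
`ε = pre t₁ (d₁ t₂) d₂ suf` and `ε_ext = pre t₁ (d₁ t₂)^(m+1) d₂ suf`. Both `pre t₁` and the block
`d₁ t₂` end with the arc `a`, so the model projection of the block is a cycle through `tgt a` and
can be traversed any number of times. On the log side, `t₁` and `t₂` project to prefixes of `α`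
of the same length, hence to the same prefix, so `mid = t₂ d₁` projects to `α`.
-/

namespace List

variable {α : Type*}

theorem flatten_replicate_succ_append (x y : List α) (m : ℕ) :
    (replicate (m + 1) (x ++ y)).flatten = x ++ (replicate m (y ++ x)).flatten ++ y := by
  induction m with
  | zero => simp
  | succ m ih => rw [replicate_succ, flatten_cons, ih, replicate_succ]; simp

theorem IsChain.append_of_getLast?_eq {R : α → α → Prop} {A A' X : List α}
    (h : IsChain R (A ++ X)) (hA' : IsChain R A') (hlast : A'.getLast? = A.getLast?) :
    IsChain R (A' ++ X) := by
  rw [isChain_append] at h ⊢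
  exact ⟨hA', h.2.1, hlast ▸ h.2.2⟩

theorem IsChain.append_flatten_replicate_append {R : α → α → Prop} {A B C : List α}
    (hlast : A.getLast? = B.getLast?) (h : IsChain R (A ++ B ++ C)) (k : ℕ) :
    IsChain R (A ++ (replicate (k + 1) B).flatten ++ C) := by
  induction k with
  | zero => simpa using h
  | succ k ih =>
    have hloop : (A ++ (replicate (k + 1) B).flatten).getLast? = A.getLast? := by
      simp [getLast?_append, hlast]
    rw [replicate_succ', flatten_append, flatten_singleton, ← append_assoc, append_assoc _ B]
    exact (append_assoc A B C ▸ h).append_of_getLast?_eq ih.left_of_append hloop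

end List

section Sync

variable {S N : Type*}

@[simp]
theorem projD_append (l l' : List (Sync S N)) : projD (l ++ l') = projD l ++ projD l' :=
  List.filterMap_append

@[simp]
theorem projRG_append (l l' : List (Sync S N)) : projRG (l ++ l') = projRG l ++ projRG l' :=
  List.filterMap_append

@[simp]
theorem projD_flatten (L : List (List (Sync S N))) : projD L.flatten = (L.map projD).flatten :=
  List.filterMap_flatten

@[simp]
theorem projRG_flatten (L : List (List (Sync S N))) :
    projRG L.flatten = (L.map projRG).flatten :=
  List.filterMap_flatten

theorem length_projD (l : List (Sync S N)) :
    (projD l).length = (l.filter fun x => !isRH x).length := by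
  induction l with
  | nil => rfl
  | cons x l ih => cases x <;> simp [projD, isRH] at ih ⊢ <;> omega

theorem getLast?_projRG_take_succ {ε : List (Sync S N)} {j : ℕ} {a : N × S × N}
    (h : ε[j]? = some (.MT a)) : (projRG (ε.take (j + 1))).getLast? = some a := by
  rw [List.take_add_one, h]
  simp [projRG]

theorem projD_take_append_drop_eq {ε₁ ε₂ : List (Sync S N)} {i i' : ℕ}
    (hD : projD ε₁ = projD ε₂)
    (hlen : ((ε₁.take i).filter fun x => !isRH x).length
      = ((ε₂.take i').filter fun x => !isRH x).length) :
    projD (ε₂.take i' ++ ε₁.drop i) = projD ε₁ := by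
  have hsplit : projD (ε₁.take i) ++ projD (ε₁.drop i)
      = projD (ε₂.take i') ++ projD (ε₂.drop i') := by
    rw [← projD_append, ← projD_append, List.take_append_drop, List.take_append_drop, hD]
  have htake := (List.append_inj hsplit (by rw [length_projD, length_projD, hlen])).1
  rw [projD_append, ← htake, ← projD_append, List.take_append_drop]

end Sync

/-- Single extension step of a reduced alignment is proper (repeatable-sequence case):
inserting `m` middle copies `mid := ε₂.take (j' + 1) ++ ε₁.drop (j + 1)` between the two
aligned copies of a tandem repeat yields an alignment whose log projection is the trace
with `m + 2` copies of the repeat type and whose model projection is again a path with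
the same first and last arcs. -/
theorem extension_step_repeatable {S N : Type*}
    (pre ε₁ ε₂ suf : List (Sync S N)) (α : List S) (a : N × S × N)
    (h₁ : projD ε₁ = α) (h₂ : projD ε₂ = α)
    (hpath : List.Chain' (fun x y => x.2.2 = y.1) (projRG (pre ++ ε₁ ++ ε₂ ++ suf)))
    (j j' : ℕ) (hj : j < ε₁.length) (hj' : j' < ε₂.length)
    (hget₁ : ε₁.get ⟨j, hj⟩ = Sync.MT a) (hget₂ : ε₂.get ⟨j', hj'⟩ = Sync.MT a)
    (hcompl : ((ε₁.take (j + 1)).filter (fun x => !isRH x)).length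
            = ((ε₂.take (j' + 1)).filter (fun x => !isRH x)).length)
    (m : ℕ) :
    projD (pre ++ ε₁ ++ (List.replicate m (ε₂.take (j' + 1) ++ ε₁.drop (j + 1))).flatten
            ++ ε₂ ++ suf)
      = projD pre ++ (List.replicate (m + 2) α).flatten ++ projD suf ∧
    List.Chain' (fun x y => x.2.2 = y.1)
      (projRG (pre ++ ε₁ ++ (List.replicate m (ε₂.take (j' + 1) ++ ε₁.drop (j + 1))).flatten
            ++ ε₂ ++ suf)) ∧
    (projRG (pre ++ ε₁ ++ (List.replicate m (ε₂.take (j' + 1) ++ ε₁.drop (j + 1))).flatten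
            ++ ε₂ ++ suf)).head?
      = (projRG (pre ++ ε₁ ++ ε₂ ++ suf)).head? ∧
    (projRG (pre ++ ε₁ ++ (List.replicate m (ε₂.take (j' + 1) ++ ε₁.drop (j + 1))).flatten
            ++ ε₂ ++ suf)).getLast?
      = (projRG (pre ++ ε₁ ++ ε₂ ++ suf)).getLast? := by
  set t₁ := ε₁.take (j + 1)
  set d₁ := ε₁.drop (j + 1)
  set t₂ := ε₂.take (j' + 1)
  set d₂ := ε₂.drop (j' + 1)
  have e₁ : t₁ ++ d₁ = ε₁ := List.take_append_drop _ _
  have e₂ : t₂ ++ d₂ = ε₂ := List.take_append_drop _ _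
  have hmid : projD (t₂ ++ d₁) = α := by
    rw [projD_take_append_drop_eq (h₁.trans h₂.symm) hcompl, h₁]
  have hlast₁ : (projRG t₁).getLast? = some a :=
    getLast?_projRG_take_succ (List.getElem?_eq_some_iff.2 ⟨hj, hget₁⟩)
  have hlast₂ : (projRG t₂).getLast? = some a :=
    getLast?_projRG_take_succ (List.getElem?_eq_some_iff.2 ⟨hj', hget₂⟩)
  have hloop : (projRG (pre ++ t₁)).getLast? = (projRG (d₁ ++ t₂)).getLast? := by
    simp only [projRG_append, List.getLast?_append, hlast₁, hlast₂, Option.some_or]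
  have hold : pre ++ ε₁ ++ ε₂ ++ suf = (pre ++ t₁) ++ (d₁ ++ t₂) ++ (d₂ ++ suf) := by
    rw [← e₁, ← e₂]
    simp only [List.append_assoc]
  have hnew : pre ++ ε₁ ++ (List.replicate m (t₂ ++ d₁)).flatten ++ ε₂ ++ suf
      = (pre ++ t₁) ++ (List.replicate (m + 1) (d₁ ++ t₂)).flatten ++ (d₂ ++ suf) := by
    rw [List.flatten_replicate_succ_append, ← e₁, ← e₂]
    simp only [List.append_assoc]
  refine ⟨?_, ?_, ?_, ?_⟩
  · rw [List.replicate_succ', List.replicate_succ]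
    simp [hmid, h₁, h₂]
  · rw [hold, projRG_append, projRG_append] at hpath
    rw [hnew, projRG_append, projRG_append, projRG_flatten, List.map_replicate]
    exact List.IsChain.append_flatten_replicate_append hloop hpath m
  · rw [hnew, hold]
    simp [List.head?_append, Option.or_assoc]
  · rw [hnew, hold]
    simp [List.getLast?_append, Option.or_assoc]
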